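/- Let (P_n)_{n≥1} be a family of probability distributions, with P_n a distribution on RB(n) for each n, such that each P_n is exchangeable and the family is sampling consistent. Then for every real number λ > e·√2 there exists a natural number m such that for all n ≥ m, for T₁, T₂ independent random trees each distributed according to P_n, E[MAST(T₁,T₂)] ≤ λ·√n. -/

import Mathlib

/-- Rooted binary leaf-labeled trees with labels of type `α`. -/
inductive RTree (α : Type) : Type where
  | leaf : α → RTree α
  | node : RTree α → RTree α → RTree α
  deriving DecidableEq

namespace RTree

variable {α β : Type}

/-- The multiset of leaf labels of a tree. -/
def leafM : RTree α → Multiset α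
  | leaf a => {a}
  | node l r => leafM l + leafM r

/-- `T` is a rooted binary leaf-labeled tree on label set `Fin n`:
every label of `Fin n` occurs exactly once among the leaves. -/
def IsRB {n : ℕ} (T : RTree (Fin n)) : Prop :=
  leafM T = (Finset.univ : Finset (Fin n)).val

/-- Relabel the leaves of a tree along a function. -/
def relabel (f : α → β) : RTree α → RTree β
  | leaf a => leaf (f a)
  | node l r => node (relabel f l) (relabel f r)

/-- Restriction of a tree to the set `A` of labels (`none` means the empty tree). -/
def restrict [DecidableEq α] (A : Finset α) : RTree α → Option (RTree α)
  | leaf a => if a ∈ A then some (leaf a) else none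
  | node l r =>
    match restrict A l, restrict A r with
    | some l', some r' => some (node l' r')
    | some l', none => some l'
    | none, some r' => some r'
    | none, none => none

/-- The size of a maximum agreement subtree of `T₁` and `T₂`: the largest cardinality
of a set `A` of labels with `T₁|_A = T₂|_A` (the empty set always agrees). -/
def mast {n : ℕ} (T₁ T₂ : RTree (Fin n)) : ℕ :=
  ((Finset.univ : Finset (Fin n)).powerset.filter
    (fun A => restrict A T₁ = restrict A T₂)).sup Finset.card

end RTree

/-- The marginal distribution on trees with `s` leaves induced by a distribution `p` on
trees with `n` leaves (supported on the finite set `RBn`):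
`pₛ(t) = ∑_{T ∈ RBn, T|_{{0,…,s−1}} = ι(t)} p(T)`, where `ι` identifies trees on `Fin s`
with trees on the label subset `{0,…,s−1}` of `Fin n`. -/
noncomputable def marginal {n : ℕ} (RBn : Finset (RTree (Fin n))) (p : RTree (Fin n) → ℝ)
    (s : ℕ) (h : s ≤ n) (t : RTree (Fin s)) : ℝ :=
  ∑ T ∈ RBn.filter (fun T =>
      RTree.restrict ((Finset.univ : Finset (Fin s)).image (Fin.castLE h)) T =
        some (RTree.relabel (Fin.castLE h) t)), p T

/-!
Fix `s < n`. By exchangeability, the probability that a given `s`-set of labels is an agreement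
set of two independent `Pₙ`-trees is the same for all `s`-sets; for `{0, …, s-1}`, sampling
consistency identifies it with `∑ₜ Pₛ(t)²`. Exchangeability of `Pₛ` gives `Pₛ(t) ≤ 1/s!`, because
the `s!` relabellings of `t` are distinct and equally likely. A union bound over `s`-sets then gives
`E[MAST] ≤ (s - 1) + n · C(n, s) / s!`, and for `s = ⌈e √(2n)⌉` the bound `s! ≥ (s/e)^s` makes the
last term at most `1`.
-/

open Finset Filter Real
open scoped Nat

namespace RTree

variable {α β : Type}

theorem leafM_relabel (f : α → β) : ∀ T : RTree α, leafM (relabel f T) = (leafM T).map f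
  | leaf a => by simp [leafM, relabel]
  | node l r => by simp [leafM, relabel, leafM_relabel f l, leafM_relabel f r]

theorem relabel_comp {γ : Type} (f : β → γ) (g : α → β) :
    ∀ T : RTree α, relabel f (relabel g T) = relabel (f ∘ g) T
  | leaf _ => rfl
  | node l r => by simp [relabel, relabel_comp f g l, relabel_comp f g r]

theorem relabel_id : ∀ T : RTree α, relabel id T = T
  | leaf _ => rfl
  | node l r => by simp [relabel, relabel_id l, relabel_id r]

theorem relabel_injective {f : α → β} (hf : Function.Injective f) :
    Function.Injective (relabel f) := by
  intro T₁ T₂ h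
  induction T₁ generalizing T₂ with
  | leaf a => cases T₂ <;> simp_all [relabel, hf.eq_iff]
  | node l r ihl ihr =>
      cases T₂ with
      | leaf b => simp [relabel] at h
      | node l' r' =>
          simp only [relabel, node.injEq] at h
          rw [ihl h.1, ihr h.2]

theorem eqOn_leafM_of_relabel_eq {f g : α → β} :
    ∀ T : RTree α, relabel f T = relabel g T → ∀ a ∈ leafM T, f a = g a
  | leaf b, h, a, ha => by
      simp only [relabel, leaf.injEq] at h
      simp only [leafM, Multiset.mem_singleton] at ha
      exact ha ▸ h
  | node l r, h, a, ha => by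
      simp only [relabel, node.injEq] at h
      simp only [leafM, Multiset.mem_add] at ha
      exact ha.elim (eqOn_leafM_of_relabel_eq l h.1 a) (eqOn_leafM_of_relabel_eq r h.2 a)

theorem exists_relabel_eq_of_forall_mem_range {f : α → β} :
    ∀ T : RTree β, (∀ b ∈ leafM T, b ∈ Set.range f) → ∃ t, relabel f t = T
  | leaf b, h => by
      obtain ⟨a, rfl⟩ := h b (by simp [leafM])
      exact ⟨leaf a, rfl⟩
  | node l r, h => by
      obtain ⟨tl, rfl⟩ :=
        exists_relabel_eq_of_forall_mem_range l fun b hb => h b (by simp [leafM, hb])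
      obtain ⟨tr, rfl⟩ :=
        exists_relabel_eq_of_forall_mem_range r fun b hb => h b (by simp [leafM, hb])
      exact ⟨node tl tr, rfl⟩

section Restrict

variable [DecidableEq α]

theorem restrict_bind_restrict {A B : Finset α} (h : B ⊆ A) :
    ∀ T : RTree α, (restrict A T).bind (restrict B) = restrict B T
  | leaf a => by
      by_cases ha : a ∈ A
      · simp [restrict, ha]
      · have hb : a ∉ B := fun hb => ha (h hb)
        simp [restrict, ha, hb]
  | node l r => by
      have hl := restrict_bind_restrict h l
      have hr := restrict_bind_restrict h r
      simp only [restrict]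
      rcases hA : restrict A l with _ | l' <;> rcases hA' : restrict A r with _ | r' <;>
        rw [hA] at hl <;> rw [hA'] at hr <;>
        simp only [Option.bind_none, Option.bind_some] at hl hr ⊢ <;>
        rw [← hl, ← hr]
      · rcases restrict B r' <;> rfl
      · rcases restrict B l' <;> rfl
      · simp only [restrict]

theorem restrict_eq_restrict_of_subset {A B : Finset α} (h : B ⊆ A) {T₁ T₂ : RTree α}
    (hA : restrict A T₁ = restrict A T₂) : restrict B T₁ = restrict B T₂ := by
  rw [← restrict_bind_restrict h T₁, ← restrict_bind_restrict h T₂, hA]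

theorem elim_leafM_restrict (A : Finset α) :
    ∀ T : RTree α, (restrict A T).elim 0 leafM = (leafM T).filter (· ∈ A)
  | leaf a => by
      by_cases ha : a ∈ A <;> simp [restrict, leafM, ha, Multiset.filter_singleton]
  | node l r => by
      have hl := elim_leafM_restrict A l
      have hr := elim_leafM_restrict A r
      simp only [restrict, leafM, Multiset.filter_add]
      rcases hA : restrict A l with _ | l' <;> rcases hA' : restrict A r with _ | r' <;>
        rw [hA] at hl <;> rw [hA'] at hr <;>
        simp only [Option.elim] at hl hr <;> rw [← hl, ← hr] <;> simp [leafM]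

theorem exists_restrict_eq_some {A : Finset α} {T : RTree α}
    (h : (leafM T).filter (· ∈ A) ≠ 0) :
    ∃ T', restrict A T = some T' ∧ leafM T' = (leafM T).filter (· ∈ A) := by
  have hleaf := elim_leafM_restrict A T
  rcases hA : restrict A T with _ | T'
  · rw [hA] at hleaf
    exact absurd hleaf.symm h
  · rw [hA] at hleaf
    exact ⟨T', rfl, hleaf⟩

theorem restrict_image_relabel [DecidableEq β] {f : α → β} (hf : Function.Injective f)
    (A : Finset α) :
    ∀ T : RTree α, restrict (A.image f) (relabel f T) = (restrict A T).map (relabel f)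
  | leaf a => by
      by_cases ha : a ∈ A <;> simp [restrict, relabel, ha, hf.eq_iff]
  | node l r => by
      have hl := restrict_image_relabel hf A l
      have hr := restrict_image_relabel hf A r
      simp only [restrict, relabel]
      rcases hA : restrict A l with _ | l' <;> rcases hA' : restrict A r with _ | r' <;>
        rw [hA] at hl <;> rw [hA'] at hr <;>
        simp only [Option.map_none, Option.map_some] at hl hr <;> rw [hl, hr] <;>
        simp [relabel]

end Restrict

variable {n : ℕ}

theorem IsRB.relabel_perm {T : RTree (Fin n)} (h : IsRB T) (σ : Equiv.Perm (Fin n)) :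
    IsRB (relabel σ T) := by
  rw [IsRB, leafM_relabel, h]
  exact congrArg Finset.val (Finset.map_univ_equiv σ)

theorem IsRB.relabel_perm_injective {T : RTree (Fin n)} (h : IsRB T) :
    Function.Injective fun σ : Equiv.Perm (Fin n) => relabel σ T :=
  fun _ _ hστ => Equiv.ext fun a => eqOn_leafM_of_relabel_eq T hστ a (by
    unfold IsRB at h
    simp [h])

theorem IsRB.exists_restrict_castLE {s : ℕ} (hs : 1 ≤ s) (hsn : s ≤ n) {T : RTree (Fin n)}
    (hT : IsRB T) : ∃ t : RTree (Fin s), IsRB t ∧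
      restrict ((univ : Finset (Fin s)).image (Fin.castLE hsn)) T =
        some (relabel (Fin.castLE hsn) t) := by
  set A := (univ : Finset (Fin s)).image (Fin.castLE hsn)
  have hAval : A.val = (univ : Finset (Fin s)).val.map (Fin.castLE hsn) :=
    image_val_of_injOn (Fin.castLE_injective hsn).injOn
  have hfilter : (leafM T).filter (· ∈ A) = A.val := by
    rw [hT, ← filter_val, filter_univ_mem]
  have hA : A.val ≠ 0 := by
    simpa [hAval, Finset.univ_eq_empty_iff] using Nat.one_le_iff_ne_zero.mp hs
  obtain ⟨T', hrestrict, hleaf⟩ := exists_restrict_eq_some (hfilter ▸ hA)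
  rw [hfilter, hAval] at hleaf
  obtain ⟨t, rfl⟩ := exists_relabel_eq_of_forall_mem_range T' fun b hb => by
    rw [hleaf] at hb
    obtain ⟨a, -, rfl⟩ := Multiset.mem_map.mp hb
    exact ⟨a, rfl⟩
  refine ⟨t, Multiset.map_injective (Fin.castLE_injective hsn) ?_, hrestrict⟩
  rwa [← leafM_relabel]

theorem mast_le_card (T₁ T₂ : RTree (Fin n)) : mast T₁ T₂ ≤ n :=
  Finset.sup_le fun A hA => by
    simpa using card_le_card (mem_powerset.mp (mem_filter.mp hA).1)

theorem mast_le_add_mul_card_agree (T₁ T₂ : RTree (Fin n)) (k : ℕ) :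
    mast T₁ T₂ ≤ k + n * #{A ∈ powersetCard (k + 1) (univ : Finset (Fin n)) | restrict A T₁ = restrict A T₂} := by
  by_cases hk : mast T₁ T₂ ≤ k
  · exact hk.trans (Nat.le_add_right k _)
  obtain ⟨A, hA, hcard⟩ := (Finset.lt_sup_iff (f := card)).mp (not_le.mp hk)
  obtain ⟨B, hBA, hBcard⟩ := exists_subset_card_eq hcard
  have hB : B ∈ {A ∈ powersetCard (k + 1) (univ : Finset (Fin n)) | restrict A T₁ = restrict A T₂} :=
    mem_filter.mpr ⟨mem_powersetCard_univ.mpr hBcard,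
      restrict_eq_restrict_of_subset hBA (mem_filter.mp hA).2⟩
  calc mast T₁ T₂ ≤ n * 1 := (mul_one n).symm ▸ mast_le_card T₁ T₂
    _ ≤ k + n * #{A ∈ powersetCard (k + 1) (univ : Finset (Fin n)) | restrict A T₁ = restrict A T₂} :=
      (Nat.mul_le_mul_left n (card_pos.mpr ⟨B, hB⟩)).trans (Nat.le_add_left _ _)

end RTree

theorem Finset.sum_sum_ite_eq_eq_sum_sq_sum_fiber {ι κ R : Type*} [CommSemiring R] [DecidableEq κ]
    (S : Finset ι) (g : ι → κ) (f : ι → R) :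
    ∑ i ∈ S, ∑ j ∈ S, (if g i = g j then f i * f j else 0) =
      ∑ y ∈ S.image g, (∑ i ∈ S with g i = y, f i) ^ 2 := by
  have hfiber : ∀ y ∈ S.image g, (∑ i ∈ S with g i = y, f i) ^ 2 =
      ∑ i ∈ S with g i = y, f i * ∑ j ∈ S with g j = g i, f j := by
    intro y _
    rw [sq, sum_mul]
    refine sum_congr rfl fun i hi => ?_
    rw [(mem_filter.mp hi).2]
  rw [sum_congr rfl hfiber, sum_fiberwise_of_maps_to fun i hi => mem_image_of_mem g hi]
  refine sum_congr rfl fun i _ => ?_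
  rw [mul_sum, sum_filter]
  simp only [eq_comm]

theorem Equiv.Perm.exists_image_eq_of_card_eq {α : Type*} [Fintype α] [DecidableEq α]
    {A B : Finset α} (h : #A = #B) : ∃ σ : Equiv.Perm α, A.image σ = B := by
  set σ := (Finset.equivOfCardEq h).extendSubtype
  refine ⟨σ, eq_of_subset_of_card_le (fun b hb => ?_) ?_⟩
  · obtain ⟨a, ha, rfl⟩ := mem_image.mp hb
    exact (Finset.equivOfCardEq h).extendSubtype_mem a ha
  · rw [card_image_of_injective _ σ.injective, h]

section Agreement

variable {n : ℕ} (RBn : Finset (RTree (Fin n))) (p : RTree (Fin n) → ℝ)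

/-- The probability that `A` is an agreement set of two independent `p`-random trees. -/
noncomputable def agreeProb (A : Finset (Fin n)) : ℝ :=
  ∑ T₁ ∈ RBn, ∑ T₂ ∈ RBn,
    if RTree.restrict A T₁ = RTree.restrict A T₂ then p T₁ * p T₂ else 0

variable {RBn p}

theorem sum_relabel_perm (hRBn : ∀ T, T ∈ RBn ↔ RTree.IsRB T) (σ : Equiv.Perm (Fin n))
    (g : RTree (Fin n) → ℝ) : ∑ T ∈ RBn, g (RTree.relabel σ T) = ∑ T ∈ RBn, g T := by
  have hinv : ∀ (τ : Equiv.Perm (Fin n)) T, RTree.relabel τ.symm (RTree.relabel τ T) = T := by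
    intro τ T
    rw [RTree.relabel_comp, τ.symm_comp_self, RTree.relabel_id]
  exact sum_nbij' (RTree.relabel σ) (RTree.relabel σ.symm)
    (fun T hT => (hRBn _).mpr (((hRBn T).mp hT).relabel_perm σ))
    (fun T hT => (hRBn _).mpr (((hRBn T).mp hT).relabel_perm σ.symm))
    (fun T _ => hinv σ T) (fun T _ => by simpa using hinv σ.symm T) fun _ _ => rfl

theorem agreeProb_image_perm (hRBn : ∀ T, T ∈ RBn ↔ RTree.IsRB T)
    (hexch : ∀ (σ : Equiv.Perm (Fin n)) T, RTree.IsRB T → p (RTree.relabel σ T) = p T)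
    (σ : Equiv.Perm (Fin n)) (A : Finset (Fin n)) :
    agreeProb RBn p (A.image σ) = agreeProb RBn p A := by
  unfold agreeProb
  rw [← sum_relabel_perm hRBn σ]
  refine sum_congr rfl fun T₁ hT₁ => ?_
  rw [← sum_relabel_perm hRBn σ]
  refine sum_congr rfl fun T₂ hT₂ => ?_
  simp only [RTree.restrict_image_relabel σ.injective,
    (Option.map_injective (RTree.relabel_injective σ.injective)).eq_iff,
    hexch σ _ ((hRBn _).mp hT₁), hexch σ _ ((hRBn _).mp hT₂)]

theorem agreeProb_eq_of_card_eq (hRBn : ∀ T, T ∈ RBn ↔ RTree.IsRB T)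
    (hexch : ∀ (σ : Equiv.Perm (Fin n)) T, RTree.IsRB T → p (RTree.relabel σ T) = p T)
    {A B : Finset (Fin n)} (h : #A = #B) : agreeProb RBn p A = agreeProb RBn p B := by
  obtain ⟨σ, rfl⟩ := Equiv.Perm.exists_image_eq_of_card_eq h
  exact (agreeProb_image_perm hRBn hexch σ A).symm

theorem agreeProb_castLE_le_sum_marginal_sq {s : ℕ} (hs : 1 ≤ s) (hsn : s ≤ n)
    (hRBn : ∀ T, T ∈ RBn ↔ RTree.IsRB T) {RBs : Finset (RTree (Fin s))}
    (hRBs : ∀ t, t ∈ RBs ↔ RTree.IsRB t) :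
    agreeProb RBn p ((univ : Finset (Fin s)).image (Fin.castLE hsn)) ≤
      ∑ t ∈ RBs, marginal RBn p s hsn t ^ 2 := by
  set A := (univ : Finset (Fin s)).image (Fin.castLE hsn)
  set ι : RTree (Fin s) → Option (RTree (Fin n)) := fun t => some (RTree.relabel (Fin.castLE hsn) t)
  have hι : Function.Injective ι :=
    (Option.some_injective _).comp (RTree.relabel_injective (Fin.castLE_injective hsn))
  have himage : RBn.image (RTree.restrict A) ⊆ RBs.image ι := by
    intro o ho
    obtain ⟨T, hT, rfl⟩ := mem_image.mp ho
    obtain ⟨t, ht, hrestrict⟩ := ((hRBn T).mp hT).exists_restrict_castLE hs hsn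
    exact mem_image.mpr ⟨t, (hRBs t).mpr ht, hrestrict.symm⟩
  calc agreeProb RBn p A
      = ∑ o ∈ RBn.image (RTree.restrict A), (∑ T ∈ RBn with RTree.restrict A T = o, p T) ^ 2 :=
        sum_sum_ite_eq_eq_sum_sq_sum_fiber RBn _ p
    _ ≤ ∑ o ∈ RBs.image ι, (∑ T ∈ RBn with RTree.restrict A T = o, p T) ^ 2 :=
        sum_le_sum_of_subset_of_nonneg himage fun _ _ _ => sq_nonneg _
    _ = ∑ t ∈ RBs, marginal RBn p s hsn t ^ 2 := sum_image fun _ _ _ _ h => hι h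

end Agreement

section Exchangeable

variable {s : ℕ} {RBs : Finset (RTree (Fin s))} {p : RTree (Fin s) → ℝ}

theorem factorial_mul_le_one_of_exchangeable (hRBs : ∀ t, t ∈ RBs ↔ RTree.IsRB t)
    (hp0 : ∀ t, 0 ≤ p t) (hp1 : ∑ t ∈ RBs, p t = 1)
    (hexch : ∀ (σ : Equiv.Perm (Fin s)) t, RTree.IsRB t → p (RTree.relabel σ t) = p t)
    {t : RTree (Fin s)} (ht : t ∈ RBs) : (s ! : ℝ) * p t ≤ 1 := by
  have htRB := (hRBs t).mp ht
  have horbit : univ.image (fun σ : Equiv.Perm (Fin s) => RTree.relabel σ t) ⊆ RBs :=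
    fun u hu => by
      obtain ⟨σ, -, rfl⟩ := mem_image.mp hu
      exact (hRBs _).mpr (htRB.relabel_perm σ)
  calc (s ! : ℝ) * p t
      = ∑ u ∈ univ.image (fun σ : Equiv.Perm (Fin s) => RTree.relabel σ t), p u := by
        rw [sum_image fun σ _ τ _ h => htRB.relabel_perm_injective h,
          sum_congr rfl fun σ _ => hexch σ t htRB, sum_const, card_univ, Fintype.card_perm,
          Fintype.card_fin, nsmul_eq_mul]
    _ ≤ ∑ u ∈ RBs, p u := sum_le_sum_of_subset_of_nonneg horbit fun u _ _ => hp0 u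
    _ = 1 := hp1

theorem sum_sq_le_inv_factorial_of_exchangeable (hRBs : ∀ t, t ∈ RBs ↔ RTree.IsRB t)
    (hp0 : ∀ t, 0 ≤ p t) (hp1 : ∑ t ∈ RBs, p t = 1)
    (hexch : ∀ (σ : Equiv.Perm (Fin s)) t, RTree.IsRB t → p (RTree.relabel σ t) = p t) :
    ∑ t ∈ RBs, p t ^ 2 ≤ (s ! : ℝ)⁻¹ := by
  have hfac : (0 : ℝ) < s ! := by positivity
  calc ∑ t ∈ RBs, p t ^ 2 ≤ ∑ t ∈ RBs, (s ! : ℝ)⁻¹ * p t := by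
        refine sum_le_sum fun t ht => ?_
        have hle : p t ≤ (s ! : ℝ)⁻¹ := by
          rw [← one_div, le_div_iff₀ hfac, mul_comm]
          exact factorial_mul_le_one_of_exchangeable hRBs hp0 hp1 hexch ht
        rw [sq]
        exact mul_le_mul_of_nonneg_right hle (hp0 t)
    _ = (s ! : ℝ)⁻¹ := by rw [← mul_sum, hp1, mul_one]

end Exchangeable

theorem sum_mul_mast_le_add_mul_sum_agreeProb {n : ℕ} {RBn : Finset (RTree (Fin n))}
    {p : RTree (Fin n) → ℝ} (hp0 : ∀ T, 0 ≤ p T) (hp1 : ∑ T ∈ RBn, p T = 1) (k : ℕ) :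
    ∑ T₁ ∈ RBn, ∑ T₂ ∈ RBn, p T₁ * p T₂ * (RTree.mast T₁ T₂ : ℝ) ≤
      k + n * ∑ A ∈ powersetCard (k + 1) (univ : Finset (Fin n)), agreeProb RBn p A := by
  have hpoint : ∀ T₁ T₂, p T₁ * p T₂ * (RTree.mast T₁ T₂ : ℝ) ≤
      p T₁ * p T₂ * k + ∑ A ∈ powersetCard (k + 1) (univ : Finset (Fin n)),
        n * if RTree.restrict A T₁ = RTree.restrict A T₂ then p T₁ * p T₂ else 0 := by
    intro T₁ T₂
    have h := (Nat.cast_le (α := ℝ)).mpr (RTree.mast_le_add_mul_card_agree T₁ T₂ k)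
    rw [card_filter] at h
    push_cast at h
    calc p T₁ * p T₂ * (RTree.mast T₁ T₂ : ℝ)
        ≤ p T₁ * p T₂ * (k + n * ∑ A ∈ powersetCard (k + 1) (univ : Finset (Fin n)),
            if RTree.restrict A T₁ = RTree.restrict A T₂ then 1 else 0) :=
          mul_le_mul_of_nonneg_left h (mul_nonneg (hp0 T₁) (hp0 T₂))
      _ = _ := by
          rw [mul_add, mul_left_comm (p T₁ * p T₂), mul_sum, mul_sum]
          simp only [mul_ite, mul_one, mul_zero]
  calc ∑ T₁ ∈ RBn, ∑ T₂ ∈ RBn, p T₁ * p T₂ * (RTree.mast T₁ T₂ : ℝ)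
      ≤ ∑ T₁ ∈ RBn, ∑ T₂ ∈ RBn, (p T₁ * p T₂ * k + ∑ A ∈ powersetCard (k + 1) univ,
          n * if RTree.restrict A T₁ = RTree.restrict A T₂ then p T₁ * p T₂ else 0) :=
        sum_le_sum fun T₁ _ => sum_le_sum fun T₂ _ => hpoint T₁ T₂
    _ = (∑ T₁ ∈ RBn, ∑ T₂ ∈ RBn, p T₁ * p T₂) * k +
          n * ∑ A ∈ powersetCard (k + 1) (univ : Finset (Fin n)), agreeProb RBn p A := by
        simp only [agreeProb, sum_add_distrib, sum_mul, mul_sum]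
        congr 1
        rw [sum_comm (s := powersetCard (k + 1) (univ : Finset (Fin n)))]
        refine sum_congr rfl fun _ _ => ?_
        exact sum_comm
    _ = k + n * ∑ A ∈ powersetCard (k + 1) (univ : Finset (Fin n)), agreeProb RBn p A := by
        rw [← sum_mul_sum, hp1, one_mul, one_mul]

theorem sq_le_two_pow_of_four_le {s : ℕ} (h : 4 ≤ s) : s ^ 2 ≤ 2 ^ s := by
  induction s, h using Nat.le_induction with
  | base => norm_num
  | succ s hs ih =>
    calc (s + 1) ^ 2 = s ^ 2 + (2 * s + 1) := by ring
      _ ≤ 2 ^ s + 2 ^ s := by gcongr; nlinarith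
      _ = 2 ^ (s + 1) := by ring

theorem mul_choose_le_factorial {n s : ℕ} (hs : 4 ≤ s) (hsn : exp 1 * √2 * √n ≤ s) :
    (n : ℝ) * n.choose s ≤ s ! := by
  have hfac : (0 : ℝ) < s ! := by positivity
  have hsq : 2 * n * exp 1 ^ 2 ≤ (s : ℝ) ^ 2 := by
    have h := pow_le_pow_left₀ (by positivity) hsn 2
    rw [mul_pow, mul_pow, sq_sqrt zero_le_two, sq_sqrt n.cast_nonneg] at h
    linarith
  have hn : (n : ℝ) ≤ 2 ^ s := calc
    (n : ℝ) ≤ 2 * n * exp 1 ^ 2 := by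
      have he : 1 ≤ exp 1 ^ 2 := one_le_pow₀ (one_le_exp zero_le_one)
      nlinarith [(n.cast_nonneg : (0 : ℝ) ≤ n)]
    _ ≤ s ^ 2 := hsq
    _ ≤ 2 ^ s := by exact_mod_cast sq_le_two_pow_of_four_le hs
  have hstirling : (s : ℝ) ^ s ≤ exp 1 ^ s * s ! := by
    have h := pow_div_factorial_le_exp s s.cast_nonneg s
    rwa [div_le_iff₀ hfac, ← exp_one_pow] at h
  have hpow : (n : ℝ) ^ (s + 1) ≤ (s ! : ℝ) ^ 2 := by
    have h2n : (2 * n : ℝ) ^ s * (exp 1 ^ s) ^ 2 ≤ (s ! : ℝ) ^ 2 * (exp 1 ^ s) ^ 2 := calc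
      (2 * n : ℝ) ^ s * (exp 1 ^ s) ^ 2 = (2 * n * exp 1 ^ 2) ^ s := by ring
      _ ≤ ((s : ℝ) ^ 2) ^ s := by gcongr
      _ = ((s : ℝ) ^ s) ^ 2 := by ring
      _ ≤ (exp 1 ^ s * s !) ^ 2 := by gcongr
      _ = (s ! : ℝ) ^ 2 * (exp 1 ^ s) ^ 2 := by ring
    calc (n : ℝ) ^ (s + 1) = n ^ s * n := pow_succ _ _
      _ ≤ n ^ s * 2 ^ s := by gcongr
      _ = (2 * n) ^ s := by ring
      _ ≤ (s ! : ℝ) ^ 2 := le_of_mul_le_mul_right h2n (by positivity)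
  calc (n : ℝ) * n.choose s ≤ n * (n ^ s / s !) := by gcongr; exact Nat.choose_le_pow_div s n
    _ = n ^ (s + 1) / s ! := by ring
    _ ≤ (s ! : ℝ) ^ 2 / s ! := by gcongr
    _ = s ! := by field_simp

theorem eventually_ceil_mul_sqrt_le {c lam : ℝ} (hc : 0 < c) (hlam : c < lam) (b : ℕ) :
    ∀ᶠ n : ℕ in atTop,
      b ≤ ⌈c * √n⌉₊ ∧ ⌈c * √n⌉₊ < n ∧ (⌈c * √n⌉₊ : ℝ) ≤ lam * √n := by
  have hsqrt : Tendsto (fun n : ℕ => √(n : ℝ)) atTop atTop :=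
    tendsto_sqrt_atTop.comp tendsto_natCast_atTop_atTop
  filter_upwards [(hsqrt.const_mul_atTop hc).eventually_ge_atTop (b : ℝ),
    (hsqrt.const_mul_atTop (sub_pos.mpr hlam)).eventually_ge_atTop 1,
    hsqrt.eventually_gt_atTop lam] with n hb hgap hlarge
  have hle : (⌈c * √n⌉₊ : ℝ) ≤ lam * √n := calc
    (⌈c * √n⌉₊ : ℝ) ≤ c * √n + 1 := (Nat.ceil_lt_add_one (by positivity)).le
    _ ≤ lam * √n := by linarith
  refine ⟨by exact_mod_cast hb.trans (Nat.le_ceil _), ?_, hle⟩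
  have hn : lam * √n < n := by
    have hpos : 0 < √(n : ℝ) := by linarith
    calc lam * √n < √n * √n := by gcongr
      _ = n := mul_self_sqrt n.cast_nonneg
  exact_mod_cast hle.trans_lt hn

section SamplingConsistent

variable (P : ∀ n : ℕ, RTree (Fin n) → ℝ) (RB : ∀ n : ℕ, Finset (RTree (Fin n)))

theorem agreeProb_le_inv_factorial_of_samplingConsistent
    (hRB : ∀ (n : ℕ) (T : RTree (Fin n)), T ∈ RB n ↔ RTree.IsRB T)
    (hP0 : ∀ (n : ℕ) (T : RTree (Fin n)), 0 ≤ P n T)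
    (hP1 : ∀ n : ℕ, 1 ≤ n → ∑ T ∈ RB n, P n T = 1)
    (hexch : ∀ (n : ℕ) (σ : Equiv.Perm (Fin n)) (T : RTree (Fin n)), RTree.IsRB T →
      P n (RTree.relabel σ T) = P n T)
    (hsc : ∀ s n : ℕ, 1 ≤ s → ∀ hsn : s < n, ∀ t ∈ RB s,
      P s t = marginal (RB n) (P n) s hsn.le t)
    {n s : ℕ} (hs : 1 ≤ s) (hsn : s < n) {A : Finset (Fin n)} (hA : #A = s) :
    agreeProb (RB n) (P n) A ≤ (s ! : ℝ)⁻¹ := by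
  have hcard : #A = #((univ : Finset (Fin s)).image (Fin.castLE hsn.le)) := by
    rw [hA, card_image_of_injective _ (Fin.castLE_injective _), card_univ, Fintype.card_fin]
  calc agreeProb (RB n) (P n) A
      = agreeProb (RB n) (P n) ((univ : Finset (Fin s)).image (Fin.castLE hsn.le)) :=
        agreeProb_eq_of_card_eq (hRB n) (hexch n) hcard
    _ ≤ ∑ t ∈ RB s, marginal (RB n) (P n) s hsn.le t ^ 2 :=
        agreeProb_castLE_le_sum_marginal_sq hs hsn.le (hRB n) (hRB s)
    _ = ∑ t ∈ RB s, P s t ^ 2 := sum_congr rfl fun t ht => by rw [hsc s n hs hsn t ht]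
    _ ≤ (s ! : ℝ)⁻¹ := sum_sq_le_inv_factorial_of_exchangeable (hRB s) (hP0 s) (hP1 s hs) (hexch s)

theorem expected_mast_le_of_exp_mul_sqrt_le
    (hRB : ∀ (n : ℕ) (T : RTree (Fin n)), T ∈ RB n ↔ RTree.IsRB T)
    (hP0 : ∀ (n : ℕ) (T : RTree (Fin n)), 0 ≤ P n T)
    (hP1 : ∀ n : ℕ, 1 ≤ n → ∑ T ∈ RB n, P n T = 1)
    (hexch : ∀ (n : ℕ) (σ : Equiv.Perm (Fin n)) (T : RTree (Fin n)), RTree.IsRB T →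
      P n (RTree.relabel σ T) = P n T)
    (hsc : ∀ s n : ℕ, 1 ≤ s → ∀ hsn : s < n, ∀ t ∈ RB s,
      P s t = marginal (RB n) (P n) s hsn.le t)
    {n s : ℕ} (hs : 4 ≤ s) (hsn : s < n) (hsqrt : exp 1 * √2 * √n ≤ s) :
    ∑ T₁ ∈ RB n, ∑ T₂ ∈ RB n, P n T₁ * P n T₂ * (RTree.mast T₁ T₂ : ℝ) ≤ s := by
  obtain ⟨k, rfl⟩ : ∃ k, s = k + 1 := ⟨s - 1, by omega⟩
  have hfac : (0 : ℝ) < (k + 1)! := by positivity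
  calc ∑ T₁ ∈ RB n, ∑ T₂ ∈ RB n, P n T₁ * P n T₂ * (RTree.mast T₁ T₂ : ℝ)
      ≤ k + n * ∑ A ∈ powersetCard (k + 1) (univ : Finset (Fin n)), agreeProb (RB n) (P n) A :=
        sum_mul_mast_le_add_mul_sum_agreeProb (hP0 n) (hP1 n (by omega)) k
    _ ≤ k + n * ∑ A ∈ powersetCard (k + 1) (univ : Finset (Fin n)), ((k + 1)! : ℝ)⁻¹ := by
        gcongr with A hA
        exact agreeProb_le_inv_factorial_of_samplingConsistent P RB hRB hP0 hP1 hexch hsc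
          (by omega) hsn (mem_powersetCard_univ.mp hA)
    _ = k + n * n.choose (k + 1) / (k + 1)! := by
        rw [sum_const, card_powersetCard, card_univ, Fintype.card_fin, nsmul_eq_mul,
          ← mul_assoc, div_eq_mul_inv]
    _ ≤ ((k + 1 : ℕ) : ℝ) := by
        have htail := (div_le_one hfac).mpr (mul_choose_le_factorial hs hsqrt)
        push_cast
        linarith

end SamplingConsistent

/-- If `(Pₙ)` is a family of exchangeable probability distributions (`Pₙ` on `RB(n)`) that is
sampling consistent, then for every `λ > e·√2` there is an `m` such that for all `n ≥ m`,
the expected size of the maximum agreement subtree of two independent `Pₙ`-random trees is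
at most `λ·√n`. -/
theorem expected_mast_sampling_consistent_upper_bound
    (P : ∀ n : ℕ, RTree (Fin n) → ℝ)
    (RB : ∀ n : ℕ, Finset (RTree (Fin n)))
    (hRB : ∀ (n : ℕ) (T : RTree (Fin n)), T ∈ RB n ↔ RTree.IsRB T)
    (hP0 : ∀ (n : ℕ) (T : RTree (Fin n)), 0 ≤ P n T)
    (hP1 : ∀ n : ℕ, 1 ≤ n → ∑ T ∈ RB n, P n T = 1)
    (hexch : ∀ (n : ℕ) (σ : Equiv.Perm (Fin n)) (T : RTree (Fin n)), RTree.IsRB T →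
      P n (RTree.relabel (⇑σ) T) = P n T)
    (hsc : ∀ (s n : ℕ) (hs : 1 ≤ s) (hsn : s < n), ∀ t ∈ RB s,
      P s t = marginal (RB n) (P n) s hsn.le t) :
    ∀ lam : ℝ, Real.exp 1 * Real.sqrt 2 < lam →
      ∃ m : ℕ, ∀ n : ℕ, m ≤ n →
        ∑ T₁ ∈ RB n, ∑ T₂ ∈ RB n, P n T₁ * P n T₂ * (RTree.mast T₁ T₂ : ℝ)
          ≤ lam * Real.sqrt n := by
  intro lam hlam
  obtain ⟨m, hm⟩ := eventually_atTop.mp (eventually_ceil_mul_sqrt_le (by positivity) hlam 4)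
  refine ⟨m, fun n hn => ?_⟩
  obtain ⟨h4, hlt, hle⟩ := hm n hn
  exact (expected_mast_le_of_exp_mul_sqrt_le P RB hRB hP0 hP1 hexch hsc h4 hlt
    (Nat.le_ceil _)).trans hle
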